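/- arXiv:2303.07241 — 2 statements merged into one kernel-verified Lean document; each statement's English description precedes it below -/
import Mathlib

section
/- Let A ∈ ℝ^{n×n}, B ∈ ℝ^{n×p}, and let g : ℝ^n → ℝ^p satisfy ‖g(x) − g(x*)‖ ≤ c‖x − x*‖ for some c ≥ 0 and fixed x* with A x* + B g(x*) = x*. Suppose there exist X ≻ 0, λ ≥ 0, and ρ ∈ [0,1) such that the block matrix [[AᵀXA − ρ²X, AᵀXB],[BᵀXA, BᵀXB]] + λ·[[c²I, 0],[0, −I]] is negative semidefinite. Then for x_{k+1} = A x_k + B g(x_k), the function V(x) = (x−x*)ᵀX(x−x*) satisfies V(x_{k+1}) ≤ ρ² V(x_k) for all k. -/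
/-!
Write `e = x_k - x*` and `w = g(x_k) - g(x*)`. Since `x*` is a fixed point, `x_{k+1} - x* = Ae + Bw`,
and the quadratic form of the LMI matrix at `(e, w)` is
`V(x_{k+1}) - ρ² V(x_k) + λ (c²|e|² - |w|²)`.
The LMI makes this nonpositive, while the Lipschitz bound makes the `λ`-term nonnegative
(an S-procedure argument).
-/

open Matrix

section QuadraticForms

variable {m n p : Type*} [Fintype m] [Fintype n] [Fintype p] {R : Type*} [CommRing R]

theorem dotProduct_transpose_mul_mul_mulVec (A : Matrix n m R) (X : Matrix n n R)
    (B : Matrix n p R) (u : m → R) (v : p → R) :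
    u ⬝ᵥ (Aᵀ * X * B) *ᵥ v = (A *ᵥ u) ⬝ᵥ X *ᵥ (B *ᵥ v) := by
  rw [← mulVec_mulVec, ← mulVec_mulVec, dotProduct_mulVec, vecMul_transpose]

theorem sumElim_dotProduct_fromBlocks_mulVec (P : Matrix n n R) (Q : Matrix n p R)
    (S : Matrix p n R) (T : Matrix p p R) (u : n → R) (v : p → R) :
    Sum.elim u v ⬝ᵥ fromBlocks P Q S T *ᵥ Sum.elim u v =
      u ⬝ᵥ P *ᵥ u + u ⬝ᵥ Q *ᵥ v + v ⬝ᵥ S *ᵥ u + v ⬝ᵥ T *ᵥ v := by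
  rw [fromBlocks_mulVec, sumElim_dotProduct_sumElim, dotProduct_add, dotProduct_add,
    Sum.elim_comp_inl, Sum.elim_comp_inr]
  ring

theorem sumElim_dotProduct_dissipationMatrix_mulVec [DecidableEq n] [DecidableEq p] (A : Matrix n n R) (B : Matrix n p R)
    (X : Matrix n n R) (ρ lam c : R) (e : n → R) (w : p → R) :
    Sum.elim e w ⬝ᵥ
        (fromBlocks (Aᵀ * X * A - ρ ^ 2 • X) (Aᵀ * X * B) (Bᵀ * X * A) (Bᵀ * X * B)
          + lam • fromBlocks ((c ^ 2) • (1 : Matrix n n R)) 0 0 (-1 : Matrix p p R))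
        *ᵥ Sum.elim e w =
      (A *ᵥ e + B *ᵥ w) ⬝ᵥ X *ᵥ (A *ᵥ e + B *ᵥ w) - ρ ^ 2 * (e ⬝ᵥ X *ᵥ e)
        + lam * (c ^ 2 * (e ⬝ᵥ e) - w ⬝ᵥ w) := by
  simp only [add_mulVec, dotProduct_add, smul_mulVec, dotProduct_smul,
    sumElim_dotProduct_fromBlocks_mulVec, dotProduct_transpose_mul_mul_mulVec, sub_mulVec,
    dotProduct_sub, one_mulVec, zero_mulVec, dotProduct_zero, neg_mulVec, dotProduct_neg,
    mulVec_add, add_dotProduct, smul_eq_mul]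
  ring

end QuadraticForms

theorem dotProduct_mulVec_le_of_dissipation_lmi {n p : Type*} [Fintype n] [Fintype p]
    [DecidableEq n] [DecidableEq p]
    {A : Matrix n n ℝ} {B : Matrix n p ℝ} {X : Matrix n n ℝ} {ρ lam c : ℝ}
    (hLMI : (-(fromBlocks (Aᵀ * X * A - ρ ^ 2 • X) (Aᵀ * X * B) (Bᵀ * X * A) (Bᵀ * X * B)
        + lam • fromBlocks ((c ^ 2) • (1 : Matrix n n ℝ)) 0 0 (-1 : Matrix p p ℝ))).PosSemidef)
    (hlam : 0 ≤ lam) {e : n → ℝ} {w : p → ℝ} (hw : w ⬝ᵥ w ≤ c ^ 2 * (e ⬝ᵥ e)) :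
    (A *ᵥ e + B *ᵥ w) ⬝ᵥ X *ᵥ (A *ᵥ e + B *ᵥ w) ≤ ρ ^ 2 * (e ⬝ᵥ X *ᵥ e) := by
  have hform := hLMI.dotProduct_mulVec_nonneg (Sum.elim e w)
  rw [star_trivial, neg_mulVec, dotProduct_neg, sumElim_dotProduct_dissipationMatrix_mulVec,
    neg_nonneg] at hform
  nlinarith [mul_nonneg hlam (sub_nonneg.mpr hw)]

theorem dotProduct_self_le_of_sqrt_le {n p : Type*} [Fintype n] [Fintype p] {w : p → ℝ}
    {e : n → ℝ} {c : ℝ} (h : √(w ⬝ᵥ w) ≤ c * √(e ⬝ᵥ e)) : w ⬝ᵥ w ≤ c ^ 2 * (e ⬝ᵥ e) := by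
  have he : 0 ≤ e ⬝ᵥ e := by simpa using dotProduct_self_star_nonneg e
  rw [Real.sqrt_le_iff, mul_pow, Real.sq_sqrt he] at h
  exact h.2

theorem stmt5_general {n p : ℕ} (A : Matrix (Fin n) (Fin n) ℝ) (B : Matrix (Fin n) (Fin p) ℝ)
    (g : (Fin n → ℝ) → Fin p → ℝ) (c : ℝ) (xs : Fin n → ℝ)
    (hg : ∀ x, Real.sqrt ((g x - g xs) ⬝ᵥ (g x - g xs)) ≤
      c * Real.sqrt ((x - xs) ⬝ᵥ (x - xs)))
    (hfix : A.mulVec xs + B.mulVec (g xs) = xs)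
    (X : Matrix (Fin n) (Fin n) ℝ) (lam : ℝ) (hlam : 0 ≤ lam)
    (ρ : ℝ)
    (hLMI : (-(Matrix.fromBlocks (Aᵀ * X * A - ρ ^ 2 • X) (Aᵀ * X * B) (Bᵀ * X * A) (Bᵀ * X * B)
        + lam • Matrix.fromBlocks ((c ^ 2) • (1 : Matrix (Fin n) (Fin n) ℝ)) 0 0
          (-1 : Matrix (Fin p) (Fin p) ℝ))).PosSemidef)
    (x : ℕ → Fin n → ℝ) (hdyn : ∀ k, x (k + 1) = A.mulVec (x k) + B.mulVec (g (x k))) :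
    ∀ k, (x (k + 1) - xs) ⬝ᵥ X.mulVec (x (k + 1) - xs) ≤
      ρ ^ 2 * ((x k - xs) ⬝ᵥ X.mulVec (x k - xs)) := by
  intro k
  have herror : x (k + 1) - xs = A *ᵥ (x k - xs) + B *ᵥ (g (x k) - g xs) := by
    rw [hdyn k, mulVec_sub, mulVec_sub]
    linear_combination (norm := module) hfix
  rw [herror]
  exact dotProduct_mulVec_le_of_dissipation_lmi hLMI hlam (dotProduct_self_le_of_sqrt_le (hg _))

/-- dissipativity certificate: if `g` satisfies the Lipschitz-type quadratic
constraint around a fixed point `x*` of `x ↦ Ax + Bg(x)` and the LMI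
`[[AᵀXA − ρ²X, AᵀXB],[BᵀXA, BᵀXB]] + λ diag(c²I, −I) ⪯ 0` holds with `X ≻ 0`, `λ ≥ 0`,
`ρ ∈ [0,1)`, then `V(x) = (x−x*)ᵀX(x−x*)` contracts: `V(x_{k+1}) ≤ ρ² V(x_k)`. -/
theorem stmt5 {n p : ℕ} (A : Matrix (Fin n) (Fin n) ℝ) (B : Matrix (Fin n) (Fin p) ℝ)
    (g : (Fin n → ℝ) → Fin p → ℝ) (c : ℝ) (hc : 0 ≤ c) (xs : Fin n → ℝ)
    (hg : ∀ x, Real.sqrt ((g x - g xs) ⬝ᵥ (g x - g xs)) ≤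
      c * Real.sqrt ((x - xs) ⬝ᵥ (x - xs)))
    (hfix : A.mulVec xs + B.mulVec (g xs) = xs)
    (X : Matrix (Fin n) (Fin n) ℝ) (hX : X.PosDef) (lam : ℝ) (hlam : 0 ≤ lam)
    (ρ : ℝ) (hρ : ρ ∈ Set.Ico (0 : ℝ) 1)
    (hLMI : (-(Matrix.fromBlocks (Aᵀ * X * A - ρ ^ 2 • X) (Aᵀ * X * B) (Bᵀ * X * A) (Bᵀ * X * B)
        + lam • Matrix.fromBlocks ((c ^ 2) • (1 : Matrix (Fin n) (Fin n) ℝ)) 0 0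
          (-1 : Matrix (Fin p) (Fin p) ℝ))).PosSemidef)
    (x : ℕ → Fin n → ℝ) (hdyn : ∀ k, x (k + 1) = A.mulVec (x k) + B.mulVec (g (x k))) :
    ∀ k, (x (k + 1) - xs) ⬝ᵥ X.mulVec (x (k + 1) - xs) ≤
      ρ ^ 2 * ((x k - xs) ⬝ᵥ X.mulVec (x k - xs)) :=
  stmt5_general A B g c xs hg hfix X lam hlam ρ hLMI x hdyn
end

section
/- Let L_F ∈ ℝ^{n_F×n_F} be symmetric positive definite, α_i ∈ (0,1] for each i, and A_F = diag(α_1,…,α_{n_F}) − τ L_F with τ > 0. If τ < (min_i (1 + α_i)) / λ_max(L_F), then A_F is symmetric and every eigenvalue of A_F has absolute value strictly less than 1. -/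
/-!
Every eigenvalue of a real symmetric matrix is a value `xᵀ A x` of its quadratic form at a unit
vector `x`. For `A = diag α - τ L` this value is `∑ αⱼ xⱼ² - τ xᵀ L x`, where the first term lies in
`[min α, 1]` and `xᵀ L x` lies in `(0, λ_max(L)]`. Hence it is `< 1`, and it is
`≥ min α - τ λ_max(L) > -1` by the hypothesis on `τ`.
-/

open Matrix

variable {ι : Type*} [Fintype ι] [DecidableEq ι]

theorem Matrix.IsHermitian.dotProduct_mulVec_le {B : Matrix ι ι ℝ} (hB : B.IsHermitian) {c : ℝ}
    (hc : ∀ i, hB.eigenvalues i ≤ c) (x : ι → ℝ) : x ⬝ᵥ B *ᵥ x ≤ c * (x ⬝ᵥ x) := by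
  set U : Matrix ι ι ℝ := (hB.eigenvectorUnitary : Matrix ι ι ℝ)
  have hUU : U * star U = 1 := mem_unitaryGroup_iff.mp hB.eigenvectorUnitary.2
  have hgap : c • 1 - B = U * diagonal (fun i ↦ c - hB.eigenvalues i) * star U := by
    conv_lhs => rw [hB.spectral_theorem]
    rw [show c • (1 : Matrix ι ι ℝ) = U * diagonal (fun _ ↦ c) * star U by
      rw [← smul_one_eq_diagonal, mul_smul_comm, smul_mul_assoc, mul_one, hUU]]
    simp [U, Unitary.conjStarAlgAut_apply, ← sub_mul, ← mul_sub, diagonal_sub]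
  have hpsd : (c • 1 - B).PosSemidef := hgap ▸
    (posSemidef_diagonal_iff.mpr fun i ↦ sub_nonneg.mpr (hc i)).mul_mul_conjTranspose_same U
  have hnonneg := hpsd.dotProduct_mulVec_nonneg x
  simp only [sub_mulVec, smul_mulVec, one_mulVec, dotProduct_sub, dotProduct_smul, smul_eq_mul,
    star_trivial] at hnonneg
  linarith

theorem Matrix.IsHermitian.eigenvalues_mem_of_dotProduct_mulVec_mem {A : Matrix ι ι ℝ}
    (hA : A.IsHermitian) {s : Set ℝ} (hs : ∀ x : ι → ℝ, x ⬝ᵥ x = 1 → x ⬝ᵥ A *ᵥ x ∈ s) (i : ι) :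
    hA.eigenvalues i ∈ s := by
  have hunit : ⇑(hA.eigenvectorBasis i) ⬝ᵥ ⇑(hA.eigenvectorBasis i) = 1 := by
    have h := real_inner_self_eq_norm_sq (hA.eigenvectorBasis i)
    rw [hA.eigenvectorBasis.orthonormal.1 i, EuclideanSpace.inner_eq_star_dotProduct] at h
    simpa using h
  simpa [hA.eigenvalues_eq i] using hs _ hunit

theorem Matrix.dotProduct_diagonal_mulVec (α x : ι → ℝ) :
    x ⬝ᵥ diagonal α *ᵥ x = ∑ j, α j * x j ^ 2 := by
  simp only [dotProduct, mulVec_diagonal]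
  exact Finset.sum_congr rfl fun j _ ↦ by ring

theorem Matrix.dotProduct_diagonal_sub_smul_mulVec_mem_Ioo {L : Matrix ι ι ℝ} (hL : L.PosDef)
    {α : ι → ℝ} {m S τ : ℝ} (hm : ∀ j, m ≤ α j) (hα : ∀ j, α j ≤ 1)
    (hS : ∀ j, hL.1.eigenvalues j ≤ S) (hτ : 0 < τ) (hτS : τ * S < 1 + m)
    {x : ι → ℝ} (hx : x ⬝ᵥ x = 1) :
    x ⬝ᵥ (diagonal α - τ • L) *ᵥ x ∈ Set.Ioo (-1) 1 := by
  have hsq : ∑ j, x j ^ 2 = 1 := by simpa [dotProduct, sq] using hx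
  have hdiag_le : x ⬝ᵥ diagonal α *ᵥ x ≤ 1 := by
    rw [dotProduct_diagonal_mulVec, ← hsq]
    gcongr with j
    exact mul_le_of_le_one_left (sq_nonneg _) (hα j)
  have hdiag_ge : m ≤ x ⬝ᵥ diagonal α *ᵥ x := by
    rw [dotProduct_diagonal_mulVec, ← mul_one m, ← hsq, Finset.mul_sum]
    gcongr with j
    exact hm j
  have hL_pos : 0 < x ⬝ᵥ L *ᵥ x := by
    simpa using hL.dotProduct_mulVec_pos (x := x) (by rintro rfl; simp at hx)
  have hL_le : x ⬝ᵥ L *ᵥ x ≤ S := by simpa [hx] using hL.1.dotProduct_mulVec_le hS x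
  rw [sub_mulVec, dotProduct_sub, smul_mulVec, dotProduct_smul, smul_eq_mul]
  constructor <;> nlinarith

theorem stmt9_general {n : ℕ} (L : Matrix (Fin n) (Fin n) ℝ) (hL : L.PosDef)
    (α : Fin n → ℝ) (hα : ∀ i, α i ∈ Set.Ioc (0 : ℝ) 1) (τ : ℝ) (hτ : 0 < τ)
    (hτ2 : τ < (⨅ i, (1 + α i)) / (⨆ i, hL.1.eigenvalues i)) :
    (Matrix.diagonal α - τ • L).IsHermitian ∧
      ∀ (h : (Matrix.diagonal α - τ • L).IsHermitian) (i : Fin n),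
        |h.eigenvalues i| < 1 := by
  refine ⟨(isHermitian_diagonal α).sub (hL.1.smul (IsSelfAdjoint.all τ)), fun h i ↦ ?_⟩
  set S := ⨆ j, hL.1.eigenvalues j
  have hS : ∀ j, hL.1.eigenvalues j ≤ S := le_ciSup (Set.finite_range _).bddAbove
  have hτS : τ * S < ⨅ j, (1 + α j) :=
    (lt_div_iff₀ ((hL.eigenvalues_pos i).trans_le (hS i))).mp hτ2
  have hm : ∀ j, (⨅ k, (1 + α k)) - 1 ≤ α j := fun j ↦
    sub_le_iff_le_add'.mpr (ciInf_le (Set.finite_range _).bddBelow j)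
  rw [abs_lt, ← Set.mem_Ioo]
  exact h.eigenvalues_mem_of_dotProduct_mulVec_mem (fun x hx ↦
    dotProduct_diagonal_sub_smul_mulVec_mem_Ioo hL hm (fun j ↦ (hα j).2) hS hτ (by linarith) hx) i

/-- Let `L_F ≻ 0` symmetric, `α_i ∈ (0,1]`, `τ > 0` with
`τ < (min_i (1+α_i))/λ_max(L_F)`. Then `A_F = diag(α) − τ L_F` is symmetric and all its
eigenvalues have absolute value strictly less than 1. -/
theorem stmt9 {n : ℕ} [NeZero n] (L : Matrix (Fin n) (Fin n) ℝ) (hL : L.PosDef)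
    (α : Fin n → ℝ) (hα : ∀ i, α i ∈ Set.Ioc (0 : ℝ) 1) (τ : ℝ) (hτ : 0 < τ)
    (hτ2 : τ < (⨅ i, (1 + α i)) / (⨆ i, hL.1.eigenvalues i)) :
    (Matrix.diagonal α - τ • L).IsHermitian ∧
      ∀ (h : (Matrix.diagonal α - τ • L).IsHermitian) (i : Fin n),
        |h.eigenvalues i| < 1 :=
  stmt9_general L hL α hα τ hτ hτ2
end
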